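/- Denoising score trick: Fix d ≥ 1, σ > 0, t > 0 and set σ_t := σ·√(1 − e^{−2t}). Let X be a random vector on ℝ^d with density p⋆, let Z ~ N(0, I_d) be a standard Gaussian vector independent of X, and set X_t := e^{−t}·X + σ_t·Z, whose density is p_t; let s⋆(t,·) := ∇ log p_t. Assume E‖s⋆(t, X_t)‖² < ∞. Then there exists a real constant C, depending only on p⋆, σ_t and d, such that for every measurable s : ℝ^d → ℝ^d with E‖s(X_t)‖² < ∞, one has E[‖s⋆(t, X_t) − s(X_t)‖²] = E[‖s(X_t) + Z/σ_t‖²] + C. -/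

import Mathlib

/-!
Expanding the squares, `‖s⋆ - s‖² = ‖s + Z/σ_t‖² + ‖s⋆‖² - ‖Z/σ_t‖² - 2⟪s, s⋆ + Z/σ_t⟫` at `X_t`,
so it suffices that the cross term `E⟪s(X_t), s⋆(X_t) + Z/σ_t⟫` vanishes. Differentiating `p_t`
under the integral sign gives Tweedie's formula
`p_t(y) s⋆(y) = -∫ p⋆(x) φ_{σ_t}(y - e^{-t}x) (y - e^{-t}x) / σ_t² dx`, where `φ_{σ_t}` is the
`N(0, σ_t² I_d)` density. After the change of variables `(x, z) ↦ (x, e^{-t}x + σ_t z)` and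
Fubini, the cross term becomes `∫ ⟪s(y), p_t(y) s⋆(y) + ∫ p⋆(x) φ_{σ_t}(y - e^{-t}x)
(y - e^{-t}x) / σ_t² dx⟫ dy = 0`.
-/

open MeasureTheory Real Set

noncomputable section

/-- `ℝ^d` with the Euclidean structure. -/
abbrev Euc (d : ℕ) := EuclideanSpace ℝ (Fin d)

/-- Density of the standard Gaussian `N(0, I_d)` on `ℝ^d`. -/
def gaussDensity (d : ℕ) (z : Euc d) : ℝ :=
  (2 * π) ^ (-(d : ℝ) / 2) * Real.exp (-‖z‖ ^ 2 / 2)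

/-- `σ_t = σ √(1 - e^{-2t})`. -/
def sigmaT (σ t : ℝ) : ℝ := σ * Real.sqrt (1 - Real.exp (-2 * t))

/-- Density `p_t` of `e^{-t} X + σ_t Z`, where `X` has density `p` and `Z ~ N(0, I_d)`
is independent of `X`. -/
def ptDensity (d : ℕ) (σ : ℝ) (p : Euc d → ℝ) (t : ℝ) (y : Euc d) : ℝ :=
  ∫ x : Euc d, p x * (2 * π * sigmaT σ t ^ 2) ^ (-(d : ℝ) / 2) *
    Real.exp (-‖y - Real.exp (-t) • x‖ ^ 2 / (2 * sigmaT σ t ^ 2))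

/-- Score function `s⋆(t, x) = ∇ log p_t(x)`. -/
def score (d : ℕ) (σ : ℝ) (p : Euc d → ℝ) (t : ℝ) (x : Euc d) : Euc d :=
  gradient (fun y => Real.log (ptDensity d σ p t y)) x

/-- `p` is a probability density on `ℝ^d`. -/
def IsProbDensity (d : ℕ) (p : Euc d → ℝ) : Prop :=
  (∀ x, 0 ≤ p x) ∧ Measurable p ∧ (∫ x, p x) = 1

open scoped RealInnerProductSpace

lemma mul_exp_neg_sq_div_le {s : ℝ} (hs : 0 < s) (u : ℝ) :
    u * exp (-u ^ 2 / (2 * s ^ 2)) ≤ s := by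
  have hu : u ≤ s * exp (u ^ 2 / (2 * s ^ 2)) := by
    have hamgm : u ≤ s * (u ^ 2 / (2 * s ^ 2) + 1) := by
      have : s * (u ^ 2 / (2 * s ^ 2) + 1) = (u ^ 2 + 2 * s ^ 2) / (2 * s) := by
        field_simp
      rw [this, le_div_iff₀ (by positivity)]
      nlinarith [sq_nonneg (u - s)]
    exact hamgm.trans (mul_le_mul_of_nonneg_left (add_one_le_exp _) hs.le)
  rwa [neg_div, exp_neg, ← div_eq_mul_inv, div_le_iff₀ (exp_pos _)]

lemma integrable_norm_sq_mul_gaussDensity (d : ℕ) :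
    Integrable (fun z : Euc d => ‖z‖ ^ 2 * gaussDensity d z) := by
  have hgauss : Integrable (fun z : Euc d => exp (-(1 / 4) * ‖z‖ ^ 2)) := by
    simpa [Complex.norm_exp, ← Complex.ofReal_pow, Complex.ofReal_re] using
      (GaussianFourier.integrable_cexp_neg_mul_sq_norm_add (V := Euc d) (b := 1 / 4)
        (by norm_num) 0 0).norm
  refine (hgauss.const_mul (4 * (2 * π) ^ (-(d : ℝ) / 2))).mono'
    (by unfold gaussDensity; fun_prop) (.of_forall fun z => ?_)
  have hve : ‖z‖ ^ 2 / 4 * exp (-(‖z‖ ^ 2 / 4)) ≤ 1 :=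
    (mul_exp_neg_le_exp_neg_one _).trans (exp_le_one_iff.2 (by norm_num))
  have hsplit : exp (-‖z‖ ^ 2 / 2) = exp (-(‖z‖ ^ 2 / 4)) * exp (-(1 / 4) * ‖z‖ ^ 2) := by
    rw [← exp_add]; ring_nf
  rw [Real.norm_eq_abs, abs_of_nonneg (by unfold gaussDensity; positivity)]
  unfold gaussDensity
  rw [hsplit]
  calc ‖z‖ ^ 2 * ((2 * π) ^ (-(d : ℝ) / 2) * (exp (-(‖z‖ ^ 2 / 4)) * exp (-(1 / 4) * ‖z‖ ^ 2)))
      = (‖z‖ ^ 2 / 4 * exp (-(‖z‖ ^ 2 / 4))) *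
          (4 * (2 * π) ^ (-(d : ℝ) / 2) * exp (-(1 / 4) * ‖z‖ ^ 2)) := by ring
    _ ≤ 4 * (2 * π) ^ (-(d : ℝ) / 2) * exp (-(1 / 4) * ‖z‖ ^ 2) :=
      mul_le_of_le_one_left (by positivity) hve

def gaussKernel (d : ℕ) (s : ℝ) (u : Euc d) : ℝ :=
  (2 * π * s ^ 2) ^ (-(d : ℝ) / 2) * exp (-‖u‖ ^ 2 / (2 * s ^ 2))

section gaussKernel

variable {d : ℕ} {s : ℝ}

lemma gaussKernel_pos (hs : s ≠ 0) (u : Euc d) : 0 < gaussKernel d s u := by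
  have : 0 < 2 * π * s ^ 2 := by positivity
  unfold gaussKernel
  positivity

lemma gaussKernel_nonneg (u : Euc d) : 0 ≤ gaussKernel d s u := by
  unfold gaussKernel
  positivity

@[fun_prop]
lemma continuous_gaussKernel : Continuous (gaussKernel d s) := by
  unfold gaussKernel
  fun_prop

lemma gaussKernel_le (u : Euc d) : gaussKernel d s u ≤ (2 * π * s ^ 2) ^ (-(d : ℝ) / 2) := by
  unfold gaussKernel
  refine mul_le_of_le_one_right (by positivity) (exp_le_one_iff.2 ?_)
  exact div_nonpos_of_nonpos_of_nonneg (by nlinarith [sq_nonneg ‖u‖]) (by positivity)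

lemma norm_mul_gaussKernel_le (hs : 0 < s) (u : Euc d) :
    ‖u‖ * gaussKernel d s u ≤ (2 * π * s ^ 2) ^ (-(d : ℝ) / 2) * s := by
  unfold gaussKernel
  rw [mul_left_comm]
  exact mul_le_mul_of_nonneg_left (mul_exp_neg_sq_div_le hs ‖u‖) (by positivity)

lemma hasGradientAt_gaussKernel (u : Euc d) :
    HasGradientAt (gaussKernel d s) ((-(s ^ 2)⁻¹ * gaussKernel d s u) • u) u := by
  have hexponent : HasFDerivAt (fun v : Euc d => -‖v‖ ^ 2 / (2 * s ^ 2))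
      (-(2 * s ^ 2)⁻¹ • 2 • innerSL ℝ u) u :=
    ((hasStrictFDerivAt_norm_sq u).hasFDerivAt.const_mul (-(2 * s ^ 2)⁻¹)).congr_of_eventuallyEq
      (.of_forall fun v => by ring)
  rw [hasGradientAt_iff_hasFDerivAt]
  refine (hexponent.exp.const_mul ((2 * π * s ^ 2) ^ (-(d : ℝ) / 2))).congr_fderiv
    (ContinuousLinearMap.ext fun v => ?_)
  simp only [gaussKernel, smul_apply, coe_innerSL_apply, nsmul_eq_mul, smul_eq_mul,
    InnerProductSpace.toDual_apply_apply, real_inner_smul_left]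
  ring

lemma gaussKernel_smul (hs : 0 < s) (z : Euc d) :
    s ^ d * gaussKernel d s (s • z) = gaussDensity d z := by
  have hrpow : (s ^ 2) ^ (-(d : ℝ) / 2) = (s ^ d)⁻¹ := by
    rw [← rpow_natCast s 2, ← rpow_mul hs.le, ← rpow_natCast s d, ← rpow_neg hs.le]
    congr 1
    push_cast
    ring
  unfold gaussKernel gaussDensity
  rw [mul_rpow (by positivity) (by positivity), hrpow, norm_smul, Real.norm_eq_abs,
    abs_of_pos hs, mul_pow]
  field_simp

lemma norm_gradient_gaussKernel_le (hs : 0 < s) (u : Euc d) :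
    ‖(-(s ^ 2)⁻¹ * gaussKernel d s u) • u‖ ≤ (2 * π * s ^ 2) ^ (-(d : ℝ) / 2) / s :=
  calc ‖(-(s ^ 2)⁻¹ * gaussKernel d s u) • u‖ = (s ^ 2)⁻¹ * (‖u‖ * gaussKernel d s u) := by
        rw [norm_smul, Real.norm_eq_abs, abs_mul, abs_neg, abs_of_pos (by positivity),
          abs_of_nonneg (gaussKernel_nonneg u), mul_assoc, mul_comm ‖u‖]
    _ ≤ (s ^ 2)⁻¹ * ((2 * π * s ^ 2) ^ (-(d : ℝ) / 2) * s) := by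
        exact mul_le_mul_of_nonneg_left (norm_mul_gaussKernel_le hs u) (by positivity)
    _ = (2 * π * s ^ 2) ^ (-(d : ℝ) / 2) / s := by field_simp

end gaussKernel

section parametric

variable {E : Type*} [NormedAddCommGroup E] [InnerProductSpace ℝ E] [CompleteSpace E]
  [MeasurableSpace E] [BorelSpace E] [SecondCountableTopology E] {μ : Measure E}

lemma hasGradientAt_integral_mul_comp_sub {p : E → ℝ} (hp : Integrable p μ) {c : E → E}
    (hc : Measurable c) {k : E → ℝ} {k' : E → E} (hk : ∀ u, HasGradientAt k (k' u) u)
    (hk' : Continuous k') {B C : ℝ} (hkB : ∀ u, |k u| ≤ B) (hk'C : ∀ u, ‖k' u‖ ≤ C) (y : E) :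
    HasGradientAt (fun y => ∫ x, p x * k (y - c x) ∂μ) (∫ x, p x • k' (y - c x) ∂μ) y := by
  have hkc : Continuous k := continuous_iff_continuousAt.2 fun u => (hk u).continuousAt
  have hk'int : Integrable (fun x => p x • k' (y - c x)) μ :=
    hp.smul_bdd C (by fun_prop) (.of_forall fun x => hk'C _)
  rw [hasGradientAt_iff_hasFDerivAt]
  change HasFDerivAt _ (innerSL ℝ _) y
  rw [← (innerSL ℝ).integral_comp_comm hk'int]
  refine hasFDerivAt_integral_of_dominated_of_fderiv_le (bound := fun x => C * ‖p x‖)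
    (F' := fun y x => innerSL ℝ (p x • k' (y - c x))) Filter.univ_mem
    (.of_forall fun y => by fun_prop) ?_ ?_ ?_ (hp.norm.const_mul C) ?_
  · exact hp.mul_bdd (by fun_prop) (.of_forall fun x => by simpa using hkB _)
  · fun_prop
  · refine .of_forall fun x y _ => ?_
    rw [innerSL_apply_norm, norm_smul, mul_comm]
    exact mul_le_mul_of_nonneg_right (hk'C _) (norm_nonneg _)
  · refine .of_forall fun x y _ => ?_
    refine (((hk (y - c x)).hasFDerivAt.comp y (hasFDerivAt_sub_const (c x))).const_mul
      (p x)).congr_fderiv (ContinuousLinearMap.ext fun v => ?_)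
    simp only [ContinuousLinearMap.comp_id, smul_apply, InnerProductSpace.toDual_apply_apply,
      smul_eq_mul, map_smul, coe_innerSL_apply]

end parametric

lemma HasGradientAt.log {E : Type*} [NormedAddCommGroup E] [InnerProductSpace ℝ E] [CompleteSpace E]
    {f : E → ℝ} {g y : E} (hf : HasGradientAt f g y) (hy : f y ≠ 0) :
    HasGradientAt (fun x => log (f x)) ((f y)⁻¹ • g) y := by
  rw [hasGradientAt_iff_hasFDerivAt] at hf ⊢
  exact (hf.log hy).congr_fderiv (by simp only [map_smul])

section shear

open Module

variable {E F : Type*} [NormedAddCommGroup E] [NormedSpace ℝ E] [MeasurableSpace E] [BorelSpace E]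
  [FiniteDimensional ℝ E] (μ : Measure E) [μ.IsAddHaarMeasure]
  [NormedAddCommGroup F] {f : E → E} {r : ℝ}

lemma measurableEmbedding_shear (hf : Measurable f) (hr : r ≠ 0) :
    MeasurableEmbedding (fun q : E × E => (q.1, f q.1 + r • q.2)) := by
  have hinv : Function.RightInverse (fun q : E × E => (q.1, r⁻¹ • (q.2 - f q.1)))
      (fun q : E × E => (q.1, f q.1 + r • q.2)) := fun q => by
    simp [smul_smul, mul_inv_cancel₀ hr]
  refine MeasurableEmbedding.of_measurable_inverse
    (g := fun q : E × E => (q.1, r⁻¹ • (q.2 - f q.1))) (by fun_prop) ?_ (by fun_prop)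
    (fun q => by simp [smul_smul, inv_mul_cancel₀ hr])
  rw [hinv.surjective.range_eq]
  exact MeasurableSet.univ

lemma measurePreserving_shear (hf : Measurable f) (hr : r ≠ 0) :
    MeasurePreserving (fun q : E × E => (q.1, f q.1 + r • q.2)) (μ.prod μ)
      (μ.prod (ENNReal.ofReal |(r ^ finrank ℝ E)⁻¹| • μ)) := by
  refine (MeasurePreserving.id μ).skew_product (g := fun x z => f x + r • z) (by fun_prop)
    (.of_forall fun x => ?_)
  have hcomp : (fun z => f x + r • z) = (f x + ·) ∘ (r • ·) := rfl
  rw [hcomp, ← Measure.map_map (by fun_prop) (by fun_prop), Measure.map_addHaar_smul μ hr,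
    Measure.map_smul, Measure.IsAddLeftInvariant.map_add_left_eq_self]

lemma integrable_comp_shear_iff (hf : Measurable f) (hr : r ≠ 0) {G : E × E → F} :
    Integrable (fun q : E × E => G (q.1, f q.1 + r • q.2)) (μ.prod μ) ↔
      Integrable G (μ.prod μ) := by
  refine ((measurePreserving_shear μ hf hr).integrable_comp_emb
    (measurableEmbedding_shear hf hr)).trans ?_
  rw [Measure.prod_smul_right, integrable_smul_measure (by simp [hr]) ENNReal.ofReal_ne_top]

lemma integral_comp_shear [NormedSpace ℝ F] (hf : Measurable f) (hr : r ≠ 0) (G : E × E → F) :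
    ∫ q, G (q.1, f q.1 + r • q.2) ∂(μ.prod μ) = |(r ^ finrank ℝ E)⁻¹| • ∫ q, G q ∂(μ.prod μ) := by
  refine ((measurePreserving_shear μ hf hr).integral_comp
    (measurableEmbedding_shear hf hr) G).trans ?_
  rw [Measure.prod_smul_right, integral_smul_measure, ENNReal.toReal_ofReal (abs_nonneg _)]

end shear

section weightedL2

variable {Ω E : Type*} [MeasurableSpace Ω] {μ : Measure Ω} [NormedAddCommGroup E]
  [InnerProductSpace ℝ E] {f g h : Ω → E} {w : Ω → ℝ}

lemma integrable_inner_mul_of_integrable_norm_sq_mul (hw : ∀ ω, 0 ≤ w ω)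
    (hwm : AEStronglyMeasurable w μ) (hf : AEStronglyMeasurable f μ)
    (hg : AEStronglyMeasurable g μ) (hf2 : Integrable (fun ω => ‖f ω‖ ^ 2 * w ω) μ)
    (hg2 : Integrable (fun ω => ‖g ω‖ ^ 2 * w ω) μ) :
    Integrable (fun ω => ⟪f ω, g ω⟫ * w ω) μ := by
  refine (hf2.fun_add hg2).mono' ((hf.inner hg).mul hwm) (.of_forall fun ω => ?_)
  rw [norm_mul, Real.norm_eq_abs, Real.norm_eq_abs, abs_of_nonneg (hw ω), ← add_mul]
  refine mul_le_mul_of_nonneg_right ((abs_real_inner_le_norm _ _).trans ?_) (hw ω)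
  nlinarith [two_mul_le_add_sq ‖f ω‖ ‖g ω‖, norm_nonneg (f ω), norm_nonneg (g ω)]

lemma integrable_norm_add_sq_mul (hw : ∀ ω, 0 ≤ w ω) (hwm : AEStronglyMeasurable w μ)
    (hf : AEStronglyMeasurable f μ) (hg : AEStronglyMeasurable g μ)
    (hf2 : Integrable (fun ω => ‖f ω‖ ^ 2 * w ω) μ)
    (hg2 : Integrable (fun ω => ‖g ω‖ ^ 2 * w ω) μ) :
    Integrable (fun ω => ‖f ω + g ω‖ ^ 2 * w ω) μ :=
  ((hf2.fun_add ((integrable_inner_mul_of_integrable_norm_sq_mul hw hwm hf hg hf2 hg2).const_mul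
    2)).fun_add hg2).congr (.of_forall fun ω => by simp only [norm_add_sq_real]; ring)

lemma integral_norm_sub_sq_mul_of_integral_inner_mul_eq_zero (hw : ∀ ω, 0 ≤ w ω)
    (hwm : AEStronglyMeasurable w μ) (hf : AEStronglyMeasurable f μ)
    (hg : AEStronglyMeasurable g μ) (hh : AEStronglyMeasurable h μ)
    (hf2 : Integrable (fun ω => ‖f ω‖ ^ 2 * w ω) μ) (hg2 : Integrable (fun ω => ‖g ω‖ ^ 2 * w ω) μ)
    (hh2 : Integrable (fun ω => ‖h ω‖ ^ 2 * w ω) μ)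
    (hcross : ∫ ω, ⟪g ω, f ω + h ω⟫ * w ω ∂μ = 0) :
    ∫ ω, ‖f ω - g ω‖ ^ 2 * w ω ∂μ =
      ∫ ω, ‖g ω + h ω‖ ^ 2 * w ω ∂μ + (∫ ω, ‖f ω‖ ^ 2 * w ω ∂μ - ∫ ω, ‖h ω‖ ^ 2 * w ω ∂μ) := by
  have hgh2 := integrable_norm_add_sq_mul hw hwm hg hh hg2 hh2
  have hcross_int := integrable_inner_mul_of_integrable_norm_sq_mul hw hwm hg (hf.fun_add hh) hg2
    (integrable_norm_add_sq_mul hw hwm hf hh hf2 hh2)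
  have hexpand : ∀ ω, ‖f ω - g ω‖ ^ 2 * w ω = (‖g ω + h ω‖ ^ 2 * w ω + ‖f ω‖ ^ 2 * w ω) -
      (‖h ω‖ ^ 2 * w ω + 2 * (⟪g ω, f ω + h ω⟫ * w ω)) := fun ω => by
    simp only [norm_sub_sq_real, norm_add_sq_real, inner_add_right, real_inner_comm (f ω)]
    ring
  rw [integral_congr_ae (.of_forall hexpand), integral_sub (hgh2.fun_add hf2) (hh2.fun_add
    (hcross_int.const_mul 2)), integral_add hgh2 hf2, integral_add hh2 (hcross_int.const_mul 2),
    integral_const_mul, hcross]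
  ring

end weightedL2

lemma sigmaT_pos {σ t : ℝ} (hσ : 0 < σ) (ht : 0 < t) : 0 < sigmaT σ t :=
  mul_pos hσ (sqrt_pos.2 (sub_pos.2 (exp_lt_one_iff.2 (by linarith))))

lemma IsProbDensity.integrable {d : ℕ} {p : Euc d → ℝ} (hp : IsProbDensity d p) : Integrable p :=
  Integrable.of_integral_ne_zero (by rw [hp.2.2]; exact one_ne_zero)

section ptDensity

variable {d : ℕ} {σ t : ℝ} {p : Euc d → ℝ}

lemma ptDensity_eq_integral_gaussKernel (y : Euc d) :
    ptDensity d σ p t y = ∫ x, p x * gaussKernel d (sigmaT σ t) (y - exp (-t) • x) := by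
  simp only [ptDensity, gaussKernel, mul_assoc]

lemma integrable_mul_gaussKernel (hp : Integrable p) (s : ℝ) (y : Euc d) :
    Integrable (fun x => p x * gaussKernel d s (y - exp (-t) • x)) :=
  hp.mul_bdd (by fun_prop)
    (.of_forall fun x => by
      rw [Real.norm_eq_abs, abs_of_nonneg (gaussKernel_nonneg _)]; exact gaussKernel_le _)

lemma ptDensity_pos (hp : IsProbDensity d p) (hσ : 0 < σ) (ht : 0 < t) (y : Euc d) :
    0 < ptDensity d σ p t y := by
  have hK := gaussKernel_pos (d := d) (sigmaT_pos hσ ht).ne'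
  have hsupp : 0 < volume (Function.support p) :=
    (integral_pos_iff_support_of_nonneg hp.1 hp.integrable).1 (by rw [hp.2.2]; exact one_pos)
  rw [ptDensity_eq_integral_gaussKernel, integral_pos_iff_support_of_nonneg
    (fun x => mul_nonneg (hp.1 x) (hK _).le) (integrable_mul_gaussKernel hp.integrable _ y)]
  convert hsupp using 2
  ext x
  simp [(hK _).ne']

lemma hasGradientAt_ptDensity (hp : IsProbDensity d p) (hσ : 0 < σ) (ht : 0 < t) (y : Euc d) :
    HasGradientAt (ptDensity d σ p t) (∫ x, p x • ((-(sigmaT σ t ^ 2)⁻¹ *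
      gaussKernel d (sigmaT σ t) (y - exp (-t) • x)) • (y - exp (-t) • x))) y := by
  rw [show ptDensity d σ p t = _ from funext ptDensity_eq_integral_gaussKernel]
  exact hasGradientAt_integral_mul_comp_sub hp.integrable (by fun_prop) hasGradientAt_gaussKernel
    (by fun_prop) (fun u => (abs_of_nonneg (gaussKernel_nonneg u)).trans_le (gaussKernel_le u))
    (norm_gradient_gaussKernel_le (sigmaT_pos hσ ht)) y

lemma measurable_score : Measurable (score d σ p t) :=
  (InnerProductSpace.toDual ℝ (Euc d)).symm.continuous.measurable.comp (measurable_fderiv ℝ _)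

lemma ptDensity_smul_score (hp : IsProbDensity d p) (hσ : 0 < σ) (ht : 0 < t) (y : Euc d) :
    ptDensity d σ p t y • score d σ p t y = ∫ x, p x • ((-(sigmaT σ t ^ 2)⁻¹ *
      gaussKernel d (sigmaT σ t) (y - exp (-t) • x)) • (y - exp (-t) • x)) := by
  have hpos := ptDensity_pos hp hσ ht y
  rw [score, ((hasGradientAt_ptDensity hp hσ ht y).log hpos.ne').gradient, smul_smul,
    mul_inv_cancel₀ hpos.ne', one_smul]

/-- Tweedie's formula `s⋆(t, y) = -E[(y - e^{-t} X) / σ_t² | X_t = y]`, tested against `v`. -/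
lemma integral_inner_score_add_mul_gaussKernel_eq_zero (hp : IsProbDensity d p) (hσ : 0 < σ)
    (ht : 0 < t) (v y : Euc d) :
    ∫ x, ⟪v, score d σ p t y + (sigmaT σ t ^ 2)⁻¹ • (y - exp (-t) • x)⟫ *
      (p x * gaussKernel d (sigmaT σ t) (y - exp (-t) • x)) = 0 := by
  have hpK := (integrable_mul_gaussKernel (t := t) hp.integrable (sigmaT σ t) y).smul_const
    (score d σ p t y)
  have hpK' : Integrable fun x => p x • ((-(sigmaT σ t ^ 2)⁻¹ *
      gaussKernel d (sigmaT σ t) (y - exp (-t) • x)) • (y - exp (-t) • x)) :=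
    hp.integrable.smul_bdd _ (by fun_prop)
      (.of_forall fun x => norm_gradient_gaussKernel_le (sigmaT_pos hσ ht) _)
  have hsplit : ∀ x, ⟪v, score d σ p t y + (sigmaT σ t ^ 2)⁻¹ • (y - exp (-t) • x)⟫ *
      (p x * gaussKernel d (sigmaT σ t) (y - exp (-t) • x)) =
      ⟪v, (p x * gaussKernel d (sigmaT σ t) (y - exp (-t) • x)) • score d σ p t y -
        p x • ((-(sigmaT σ t ^ 2)⁻¹ * gaussKernel d (sigmaT σ t) (y - exp (-t) • x)) •
          (y - exp (-t) • x))⟫ := fun x => by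
    rw [mul_comm, ← real_inner_smul_right]
    congr 1
    module
  rw [integral_congr_ae (.of_forall hsplit)]
  refine (integral_inner (hpK.sub hpK') v).trans ?_
  rw [integral_sub' hpK hpK', integral_smul_const, ← ptDensity_eq_integral_gaussKernel,
    ptDensity_smul_score hp hσ ht, sub_self, inner_zero_right]

lemma integral_inner_score_add_noise_eq_zero
    (hp : IsProbDensity d p) (hσ : 0 < σ) (ht : 0 < t) {s : Euc d → Euc d}
    (hint : Integrable fun xz : Euc d × Euc d =>
      ⟪s (exp (-t) • xz.1 + sigmaT σ t • xz.2),
        score d σ p t (exp (-t) • xz.1 + sigmaT σ t • xz.2) + (sigmaT σ t)⁻¹ • xz.2⟫ *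
        (p xz.1 * gaussDensity d xz.2)) :
    ∫ xz : Euc d × Euc d, ⟪s (exp (-t) • xz.1 + sigmaT σ t • xz.2),
        score d σ p t (exp (-t) • xz.1 + sigmaT σ t • xz.2) + (sigmaT σ t)⁻¹ • xz.2⟫ *
        (p xz.1 * gaussDensity d xz.2) = 0 := by
  set st := sigmaT σ t
  have hst : 0 < st := sigmaT_pos hσ ht
  -- the integrand in the coordinates `(x, y) = (x, e^{-t} x + σ_t z)`
  set H : Euc d × Euc d → ℝ := fun q =>
    ⟪s q.2, score d σ p t q.2 + (st ^ 2)⁻¹ • (q.2 - exp (-t) • q.1)⟫ *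
      (p q.1 * gaussKernel d st (q.2 - exp (-t) • q.1))
  have hchange : ∀ q : Euc d × Euc d,
      ⟪s (exp (-t) • q.1 + st • q.2), score d σ p t (exp (-t) • q.1 + st • q.2) + st⁻¹ • q.2⟫ *
        (p q.1 * gaussDensity d q.2) = st ^ d * H (q.1, exp (-t) • q.1 + st • q.2) := by
    rintro ⟨x, z⟩
    have hnoise : (st ^ 2)⁻¹ • st • z = st⁻¹ • z := by
      rw [smul_smul, sq, mul_inv, inv_mul_cancel_right₀ hst.ne']
    simp only [H, add_sub_cancel_left, hnoise, ← gaussKernel_smul hst z]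
    ring
  have hH : Integrable H (volume.prod volume) := by
    rw [← integrable_comp_shear_iff volume (measurable_const_smul (exp (-t))) hst.ne',
      ← integrable_const_mul_iff (IsUnit.mk0 _ (pow_ne_zero d hst.ne'))]
    exact hint.congr (.of_forall hchange)
  rw [integral_congr_ae (.of_forall hchange), integral_const_mul, Measure.volume_eq_prod,
    integral_comp_shear volume (measurable_const_smul (exp (-t))) hst.ne', integral_prod_symm H hH]
  simp only [H, st, integral_inner_score_add_mul_gaussKernel_eq_zero hp hσ ht, integral_zero,
    smul_zero, mul_zero]

end ptDensity

theorem denoising_score_trick_general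
    (d : ℕ) (σ t : ℝ) (hσ : 0 < σ) (ht : 0 < t)
    (p : Euc d → ℝ) (hp : IsProbDensity d p)
    (hscore_int : Integrable (fun xz : Euc d × Euc d =>
      ‖score d σ p t (Real.exp (-t) • xz.1 + sigmaT σ t • xz.2)‖ ^ 2 *
        (p xz.1 * gaussDensity d xz.2))) :
    ∃ C : ℝ, ∀ s : Euc d → Euc d, Measurable s →
      Integrable (fun xz : Euc d × Euc d =>
        ‖s (Real.exp (-t) • xz.1 + sigmaT σ t • xz.2)‖ ^ 2 *
          (p xz.1 * gaussDensity d xz.2)) →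
      (∫ xz : Euc d × Euc d,
          ‖score d σ p t (Real.exp (-t) • xz.1 + sigmaT σ t • xz.2)
              - s (Real.exp (-t) • xz.1 + sigmaT σ t • xz.2)‖ ^ 2 *
            (p xz.1 * gaussDensity d xz.2))
        = (∫ xz : Euc d × Euc d,
            ‖s (Real.exp (-t) • xz.1 + sigmaT σ t • xz.2) + (sigmaT σ t)⁻¹ • xz.2‖ ^ 2 *
              (p xz.1 * gaussDensity d xz.2)) + C := by
  have hw : ∀ xz : Euc d × Euc d, 0 ≤ p xz.1 * gaussDensity d xz.2 := fun xz =>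
    mul_nonneg (hp.1 _) (by unfold gaussDensity; positivity)
  have hwm : AEStronglyMeasurable (fun xz : Euc d × Euc d => p xz.1 * gaussDensity d xz.2) :=
    (hp.2.1.comp measurable_fst).aestronglyMeasurable.mul (by unfold gaussDensity; fun_prop)
  have hnoise : Integrable fun xz : Euc d × Euc d =>
      ‖(sigmaT σ t)⁻¹ • xz.2‖ ^ 2 * (p xz.1 * gaussDensity d xz.2) := by
    rw [Measure.volume_eq_prod]
    refine (hp.integrable.mul_prod ((integrable_norm_sq_mul_gaussDensity d).const_mul
      ((sigmaT σ t)⁻¹ ^ 2))).congr (.of_forall fun xz => ?_)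
    simp only [norm_smul, mul_pow, Real.norm_eq_abs, sq_abs]
    ring
  have hscore : AEStronglyMeasurable fun xz : Euc d × Euc d =>
      score d σ p t (exp (-t) • xz.1 + sigmaT σ t • xz.2) :=
    (measurable_score.comp (by fun_prop)).aestronglyMeasurable
  refine ⟨(∫ xz : Euc d × Euc d, ‖score d σ p t (exp (-t) • xz.1 + sigmaT σ t • xz.2)‖ ^ 2 *
      (p xz.1 * gaussDensity d xz.2)) - ∫ xz : Euc d × Euc d,
      ‖(sigmaT σ t)⁻¹ • xz.2‖ ^ 2 * (p xz.1 * gaussDensity d xz.2), fun s hs hs_int => ?_⟩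
  have hs' : AEStronglyMeasurable fun xz : Euc d × Euc d =>
      s (exp (-t) • xz.1 + sigmaT σ t • xz.2) :=
    (hs.comp (by fun_prop)).aestronglyMeasurable
  have hcross := integral_inner_score_add_noise_eq_zero hp hσ ht
    (integrable_inner_mul_of_integrable_norm_sq_mul hw hwm hs' (hscore.fun_add (by fun_prop))
      hs_int (integrable_norm_add_sq_mul hw hwm hscore (by fun_prop) hscore_int hnoise))
  exact integral_norm_sub_sq_mul_of_integral_inner_mul_eq_zero hw hwm hscore hs' (by fun_prop)
    hscore_int hs_int hnoise hcross

/-- **Denoising score trick (Theorem 2, Vincent).**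
Expectations with respect to the pair `(X, Z)` with `X ∼ p⋆(x)dx` independent of
`Z ∼ N(0, I_d)` are written as integrals against the joint density
`p⋆(x) g_d(z)`, and `X_t = e^{-t} X + σ_t Z`.  Under square-integrability of the
true score along `X_t`, there is a constant `C` (depending only on `p⋆`, `σ_t` and `d`)
such that for every measurable square-integrable candidate score `s`,
`E‖s⋆(t, X_t) - s(X_t)‖² = E‖s(X_t) + Z/σ_t‖² + C`. -/
theorem denoising_score_trick
    (d : ℕ) (hd : 1 ≤ d) (σ t : ℝ) (hσ : 0 < σ) (ht : 0 < t)
    (p : Euc d → ℝ) (hp : IsProbDensity d p)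
    (hscore_int : Integrable (fun xz : Euc d × Euc d =>
      ‖score d σ p t (Real.exp (-t) • xz.1 + sigmaT σ t • xz.2)‖ ^ 2 *
        (p xz.1 * gaussDensity d xz.2))) :
    ∃ C : ℝ, ∀ s : Euc d → Euc d, Measurable s →
      Integrable (fun xz : Euc d × Euc d =>
        ‖s (Real.exp (-t) • xz.1 + sigmaT σ t • xz.2)‖ ^ 2 *
          (p xz.1 * gaussDensity d xz.2)) →
      (∫ xz : Euc d × Euc d,
          ‖score d σ p t (Real.exp (-t) • xz.1 + sigmaT σ t • xz.2)
              - s (Real.exp (-t) • xz.1 + sigmaT σ t • xz.2)‖ ^ 2 *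
            (p xz.1 * gaussDensity d xz.2))
        = (∫ xz : Euc d × Euc d,
            ‖s (Real.exp (-t) • xz.1 + sigmaT σ t • xz.2) + (sigmaT σ t)⁻¹ • xz.2‖ ^ 2 *
              (p xz.1 * gaussDensity d xz.2)) + C :=
  denoising_score_trick_general d σ t hσ ht p hp hscore_int

end
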